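/- arXiv:1705.10253 — 7 statements merged into one kernel-verified Lean document; each statement's English description precedes it below -/
import Mathlib

section
/- If f : 2^U → ℝ≥0 is monotone and satisfies accountability (for every nonempty S there exists s ∈ S with f(S \ {s}) ≥ f(S) - f(S)/|S|), then for every finite set S of cardinality k there is an ordering s_1, ..., s_k of S such that the densities f({s_1,...,s_i})/i are monotonically non-increasing in i. -/
/-!
Peel off the elements of `S` from the back: accountability yields `s ∈ S` with
`f (S \ {s}) ≥ f S · (|S| - 1) / |S|`, i.e. the density of `S \ {s}` is at least that of `S`.
Ordering `S \ {s}` recursively and appending `s` gives the required ordering.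
-/

lemma div_succ_le_div_of_sub_div_le {x y : ℝ} {n : ℕ} (hn : 0 < n)
    (h : x - x / (n + 1) ≤ y) : x / (n + 1) ≤ y / n := by
  have hn' : (0 : ℝ) < n := by exact_mod_cast hn
  rw [div_le_div_iff₀ (by positivity) hn']
  have hx : x - x / (n + 1) = x * n / (n + 1) := by field_simp; ring
  rw [hx, div_le_iff₀ (by positivity)] at h
  linarith

section

variable {U : Type*} [DecidableEq U]

def HasAntitonePrefixDensities (f : Finset U → ℝ) (l : List U) : Prop :=
  ∀ i : ℕ, 1 ≤ i → i + 1 ≤ l.length →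
    f ((l.take (i + 1)).toFinset) / (i + 1) ≤ f ((l.take i).toFinset) / i

theorem HasAntitonePrefixDensities.append_singleton {f : Finset U → ℝ} {l : List U} {s : U}
    (hl : HasAntitonePrefixDensities f l)
    (hs : 1 ≤ l.length →
      f (l ++ [s]).toFinset / (l.length + 1) ≤ f l.toFinset / l.length) :
    HasAntitonePrefixDensities f (l ++ [s]) := by
  intro i hi hlen
  rw [List.length_append, List.length_singleton] at hlen
  rcases Nat.lt_or_ge i l.length with hlt | hge
  · rw [List.take_append_of_le_length hlt, List.take_append_of_le_length hlt.le]
    exact hl i hi hlt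
  · obtain rfl : i = l.length := by omega
    rw [List.take_of_length_le (by simp), List.take_left' rfl]
    exact hs hi

theorem exists_nodup_hasAntitonePrefixDensities (f : Finset U → ℝ)
    (hacc : ∀ S : Finset U, S.Nonempty →
      ∃ s ∈ S, f (S.erase s) ≥ f S - f S / S.card)
    (S : Finset U) :
    ∃ l : List U, l.Nodup ∧ l.toFinset = S ∧ HasAntitonePrefixDensities f l := by
  induction S using Finset.strongInduction with
  | H S ih =>
  rcases S.eq_empty_or_nonempty with rfl | hne
  · exact ⟨[], List.nodup_nil, rfl, fun _ _ hlen => by simp at hlen⟩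
  obtain ⟨s, hs, hfs⟩ := hacc S hne
  obtain ⟨l, hnd, htf, hdens⟩ := ih (S.erase s) (Finset.erase_ssubset hs)
  have hsl : s ∉ l := fun h => by simpa [htf] using List.mem_toFinset.mpr h
  have hS : (l ++ [s]).toFinset = S := by
    rw [List.toFinset_append, htf]
    simpa [Finset.union_comm] using Finset.insert_erase hs
  have hcard : (S.card : ℝ) = l.length + 1 := by
    rw [← Finset.card_erase_add_one hs, ← htf, List.toFinset_card_of_nodup hnd]
    push_cast; ring
  refine ⟨l ++ [s], hnd.append (List.nodup_singleton s) (by simpa using hsl), hS,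
    hdens.append_singleton fun hlen => ?_⟩
  rw [hS, htf]
  rw [hcard] at hfs
  exact div_succ_le_div_of_sub_div_le hlen hfs

end

theorem stmt_0_general {U : Type*} [DecidableEq U] (f : Finset U → ℝ)
    (hacc : ∀ S : Finset U, S.Nonempty →
      ∃ s ∈ S, f (S.erase s) ≥ f S - f S / S.card)
    (S : Finset U) (k : ℕ) (hk : S.card = k) :
    ∃ l : List U, l.Nodup ∧ l.toFinset = S ∧ l.length = k ∧
      ∀ i : ℕ, 1 ≤ i → i + 1 ≤ k →
        f ((l.take (i + 1)).toFinset) / (i + 1) ≤ f ((l.take i).toFinset) / i := by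
  obtain ⟨l, hnd, hS, hdens⟩ := exists_nodup_hasAntitonePrefixDensities f hacc S
  have hlen : l.length = k := by rw [← hk, ← hS, List.toFinset_card_of_nodup hnd]
  exact ⟨l, hnd, hS, hlen, hlen ▸ hdens⟩

/-- Accountable monotone nonnegative set functions admit a greedy order of any
set with non-increasing prefix densities. -/
theorem stmt_0 {U : Type*} [DecidableEq U] (f : Finset U → ℝ)
    (hnonneg : ∀ S : Finset U, 0 ≤ f S)
    (hmono : ∀ S T : Finset U, S ⊆ T → f S ≤ f T)
    (hacc : ∀ S : Finset U, S.Nonempty →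
      ∃ s ∈ S, f (S.erase s) ≥ f S - f S / S.card)
    (S : Finset U) (k : ℕ) (hk : S.card = k) :
    ∃ l : List U, l.Nodup ∧ l.toFinset = S ∧ l.length = k ∧
      ∀ i : ℕ, 1 ≤ i → i + 1 ≤ k →
        f ((l.take (i + 1)).toFinset) / (i + 1) ≤ f ((l.take i).toFinset) / i :=
  stmt_0_general f hacc S k hk
end

section
/- If f : 2^U → ℝ≥0 satisfies the accountability property, then the optimal density is non-increasing in cardinality: for all 1 ≤ k' ≤ k ≤ |U|, OPT(k')/k' ≥ OPT(k)/k, where OPT(j) := max over S ⊆ U with |S| = j of f(S). -/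
/-!
Removing the element supplied by accountability from an optimal set of size `n + 1` leaves a
set of size `n` that keeps at least an `n / (n + 1)` fraction of the value, so
`OPT n ≥ n / (n + 1) · OPT (n + 1)`. Hence `j ↦ OPT j / j` decreases by one step at a time.
-/

section

open Finset

variable {U : Type*} [DecidableEq U]

def IsAccountable (f : Finset U → ℝ) : Prop :=
  ∀ S : Finset U, S.Nonempty → ∃ s ∈ S, f (S.erase s) ≥ f S - f S / #S

theorem IsAccountable.exists_mul_le {f : Finset U → ℝ} (hf : IsAccountable f)
    {S : Finset U} (hS : S.Nonempty) :
    ∃ s ∈ S, f S * (#S - 1 : ℝ) ≤ f (S.erase s) * #S := by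
  obtain ⟨s, hs, hle⟩ := hf S hS
  have hcard : (0 : ℝ) < #S := by exact_mod_cast hS.card_pos
  refine ⟨s, hs, ?_⟩
  calc f S * (#S - 1 : ℝ) = (f S - f S / #S) * #S := by field_simp
    _ ≤ f (S.erase s) * #S := by gcongr

theorem IsAccountable.opt_succ_div_le {f : Finset U → ℝ} (hf : IsAccountable f)
    {OPT : ℕ → ℝ} {n : ℕ} (hn : 1 ≤ n)
    (hOPT : IsGreatest {x | ∃ S : Finset U, #S = n ∧ f S = x} (OPT n))
    (hOPT_succ : IsGreatest {x | ∃ S : Finset U, #S = n + 1 ∧ f S = x} (OPT (n + 1))) :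
    OPT (n + 1) / (n + 1 : ℕ) ≤ OPT n / n := by
  obtain ⟨⟨S, hScard, hSf⟩, -⟩ := hOPT_succ
  rw [← hSf]
  obtain ⟨s, hs, hle⟩ := hf.exists_mul_le (S := S) (card_pos.mp (by omega))
  have hT : f (S.erase s) ≤ OPT n :=
    hOPT.2 ⟨S.erase s, by simp [card_erase_of_mem hs, hScard], rfl⟩
  rw [hScard] at hle
  push_cast at hle ⊢
  rw [div_le_div_iff₀ (by positivity) (by exact_mod_cast hn)]
  calc f S * n = f S * ((n + 1 : ℝ) - 1) := by ring
    _ ≤ f (S.erase s) * (n + 1) := hle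
    _ ≤ OPT n * (n + 1) := by gcongr

end

theorem stmt_1_general {U : Type*} [Fintype U] [DecidableEq U] (f : Finset U → ℝ)
    (hacc : ∀ S : Finset U, S.Nonempty →
      ∃ s ∈ S, f (S.erase s) ≥ f S - f S / S.card)
    (OPT : ℕ → ℝ)
    (hOPT : ∀ j ≤ Fintype.card U,
      IsGreatest {x | ∃ S : Finset U, S.card = j ∧ f S = x} (OPT j))
    (k' k : ℕ) (h1 : 1 ≤ k') (h2 : k' ≤ k) (h3 : k ≤ Fintype.card U) :
    OPT k / k ≤ OPT k' / k' := by
  have hf : IsAccountable f := hacc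
  have hanti : AntitoneOn (fun j : ℕ => OPT j / j) (Set.Icc 1 (Fintype.card U)) :=
    antitoneOn_of_add_one_le Set.ordConnected_Icc fun n _ hn hn1 =>
      hf.opt_succ_div_le hn.1 (hOPT n hn.2) (hOPT (n + 1) hn1.2)
  exact hanti ⟨h1, h2.trans h3⟩ ⟨h1.trans h2, h3⟩ h2

/-- For accountable nonnegative set functions the optimal density is
non-increasing in the cardinality. -/
theorem stmt_1 {U : Type*} [Fintype U] [DecidableEq U] (f : Finset U → ℝ)
    (hnonneg : ∀ S : Finset U, 0 ≤ f S)
    (hacc : ∀ S : Finset U, S.Nonempty →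
      ∃ s ∈ S, f (S.erase s) ≥ f S - f S / S.card)
    (OPT : ℕ → ℝ)
    (hOPT : ∀ j ≤ Fintype.card U,
      IsGreatest {x | ∃ S : Finset U, S.card = j ∧ f S = x} (OPT j))
    (k' k : ℕ) (h1 : 1 ≤ k') (h2 : k' ≤ k) (h3 : k ≤ Fintype.card U) :
    OPT k / k ≤ OPT k' / k' :=
  stmt_1_general f hacc OPT hOPT k' k h1 h2 h3
end

section
/- Define k_0 := 1 and k_i := ⌈(1+φ)·k_{i-1}⌉ for i ≥ 1, where φ = (1+√5)/2 is the golden ratio, and define t_0 := k_0 and t_i := t_{i-1} + k_i. Then for every i ≥ 0, t_i ≤ φ·k_i. -/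
/-!
Write `φ` for the golden ratio. Since `(φ - 1)(1 + φ) = φ² - 1 = φ`, a sequence growing by a factor
of at least `1 + φ` satisfies `φ k i ≤ (φ - 1) k (i + 1)`. Hence if `t i ≤ φ k i`, then
`t (i + 1) = t i + k (i + 1) ≤ (φ - 1) k (i + 1) + k (i + 1) = φ k (i + 1)`, and the claim follows
by induction.
-/

namespace Real

theorem goldenRatio_sub_one_mul_one_add_goldenRatio :
    (goldenRatio - 1) * (1 + goldenRatio) = goldenRatio := by
  linear_combination goldenRatio_sq

theorem partialSum_le_goldenRatio_mul_of_growth {k t : ℕ → ℝ} (hk0 : 0 ≤ k 0)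
    (hk : ∀ i, (1 + goldenRatio) * k i ≤ k (i + 1))
    (ht0 : t 0 = k 0) (ht : ∀ i, t (i + 1) = t i + k (i + 1)) :
    ∀ i, t i ≤ goldenRatio * k i := by
  have hφ : 1 < goldenRatio := one_lt_goldenRatio
  intro i
  induction i with
  | zero => rw [ht0]; nlinarith
  | succ n ih =>
    have hstep : goldenRatio * k n ≤ (goldenRatio - 1) * k (n + 1) := by
      calc goldenRatio * k n = (goldenRatio - 1) * ((1 + goldenRatio) * k n) := by
            rw [← mul_assoc, goldenRatio_sub_one_mul_one_add_goldenRatio]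
        _ ≤ (goldenRatio - 1) * k (n + 1) := mul_le_mul_of_nonneg_left (hk n) (by linarith)
    rw [ht n]
    linarith

end Real

theorem stmt_2_general (φ : ℝ) (hφ : φ = (1 + Real.sqrt 5) / 2)
    (k t : ℕ → ℕ)
    (hk : ∀ i : ℕ, k (i + 1) = ⌈(1 + φ) * k i⌉₊)
    (ht0 : t 0 = k 0) (ht : ∀ i : ℕ, t (i + 1) = t i + k (i + 1)) :
    ∀ i : ℕ, (t i : ℝ) ≤ φ * k i := by
  subst hφ
  refine Real.partialSum_le_goldenRatio_mul_of_growth (Nat.cast_nonneg _) (fun i => ?_)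
    (by rw [ht0]) (fun i => by rw [ht i, Nat.cast_add])
  rw [hk i]
  exact Nat.le_ceil _

/-- With `k 0 = 1`, `k (i+1) = ⌈(1+φ) k i⌉` and `t i = ∑ k j`, we have `t i ≤ φ k i`. -/
theorem stmt_2 (φ : ℝ) (hφ : φ = (1 + Real.sqrt 5) / 2)
    (k t : ℕ → ℕ)
    (hk0 : k 0 = 1) (hk : ∀ i : ℕ, k (i + 1) = ⌈(1 + φ) * k i⌉₊)
    (ht0 : t 0 = k 0) (ht : ∀ i : ℕ, t (i + 1) = t i + k (i + 1)) :
    ∀ i : ℕ, (t i : ℝ) ≤ φ * k i :=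
  stmt_2_general φ hφ k t hk ht0 ht
end

section
/- With k_i := ⌈(1+φ)·k_{i-1}⌉, k_0 = 1, t_i := t_{i-1} + k_i, t_0 = 1, and φ the golden ratio: for every i ≥ 1 and every integer k with k_i ≤ k ≤ t_i, writing k = k_i + k', it holds that k - t_{i-1} ≥ k' + k_{i-1} + 1 and consequently (1+φ)(k - t_{i-1}) > k. -/
/-!
The invariant `t_j < φ k_j` propagates: if `(1 + φ) k_j ≤ k_{j+1}` then
`φ k_{j+1} - k_{j+1} = (φ - 1) k_{j+1} ≥ (φ² - 1) k_j = φ k_j > t_j`.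
Since `k_{j+1} = k_j + ⌈φ k_j⌉` and `t_j < φ k_j` forces `t_j < ⌈φ k_j⌉`, we get
`k_{j+1} ≥ t_j + k_j + 1`, which is the first claim; the second follows from it and
`k_{j+1} < (1 + φ) k_j + 1`.
-/

open Real

lemma add_lt_goldenRatio_mul {t k k' : ℝ} (ht : t < goldenRatio * k)
    (hk : (1 + goldenRatio) * k ≤ k') : t + k' < goldenRatio * k' := by
  have hgap : goldenRatio * k ≤ (goldenRatio - 1) * k' :=
    calc goldenRatio * k = (goldenRatio - 1) * ((1 + goldenRatio) * k) := by
          linear_combination (-k) * goldenRatio_sq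
      _ ≤ (goldenRatio - 1) * k' :=
          mul_le_mul_of_nonneg_left hk (sub_nonneg.2 one_lt_goldenRatio.le)
  linarith

lemma add_add_one_le_ceil_one_add_mul {t m : ℕ} {x : ℝ} (h : (t : ℝ) < x * m) :
    t + m + 1 ≤ ⌈(1 + x) * m⌉₊ := by
  have hxm : 0 ≤ x * m := (Nat.cast_nonneg t).trans h.le
  have hceil : ⌈(1 + x) * m⌉₊ = ⌈x * m⌉₊ + m := by
    rw [one_add_mul, add_comm, Nat.ceil_add_natCast hxm]
  have := Nat.lt_ceil.2 h
  omega

lemma lt_one_add_mul_sub {a k₀ k₁ k' t : ℝ} (ha : 0 ≤ a) (hk₁ : k₁ < (1 + a) * k₀ + 1)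
    (hk' : 0 ≤ k') (h : t + k' + k₀ + 1 ≤ k₁ + k') :
    k₁ + k' < (1 + a) * (k₁ + k' - t) := by
  have : (1 + a) * (k' + k₀ + 1) ≤ (1 + a) * (k₁ + k' - t) :=
    mul_le_mul_of_nonneg_left (by linarith) (by linarith)
  nlinarith

/-- For `k_i ≤ K ≤ t_i`, writing `K = k_i + k'`, one has
`K - t_{i-1} ≥ k' + k_{i-1} + 1` and hence `(1+φ)(K - t_{i-1}) > K`. -/
theorem stmt_3 (φ : ℝ) (hφ : φ = (1 + Real.sqrt 5) / 2)
    (k t : ℕ → ℕ)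
    (hk0 : k 0 = 1) (hk : ∀ i : ℕ, k (i + 1) = ⌈(1 + φ) * k i⌉₊)
    (ht0 : t 0 = 1) (ht : ∀ i : ℕ, t (i + 1) = t i + k (i + 1)) :
    ∀ i : ℕ, 1 ≤ i → ∀ k' K : ℕ, K = k i + k' → K ≤ t i →
      t (i - 1) + k' + k (i - 1) + 1 ≤ K ∧
      (K : ℝ) < (1 + φ) * ((K : ℝ) - t (i - 1)) := by
  replace hφ : φ = goldenRatio := hφ
  subst hφ
  have ht_lt : ∀ j, (t j : ℝ) < goldenRatio * k j := by
    intro j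
    induction j with
    | zero => simpa [ht0, hk0] using one_lt_goldenRatio
    | succ j ih =>
      rw [ht, Nat.cast_add]
      exact add_lt_goldenRatio_mul ih (hk j ▸ Nat.le_ceil _)
  intro i hi k' K hK _
  obtain ⟨j, rfl⟩ : ∃ j, i = j + 1 := ⟨i - 1, by omega⟩
  rw [Nat.add_sub_cancel]
  have hgap : t j + k' + k j + 1 ≤ K := by
    have := hk j ▸ add_add_one_le_ceil_one_add_mul (ht_lt j)
    omega
  refine ⟨hgap, ?_⟩
  subst hK
  push_cast
  have hceil : (k (j + 1) : ℝ) < (1 + goldenRatio) * k j + 1 :=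
    hk j ▸ Nat.ceil_lt_add_one (by positivity)
  exact lt_one_add_mul_sub goldenRatio_pos.le hceil (Nat.cast_nonneg k') (by exact_mod_cast hgap)
end

section
/- The objective function of Region Choosing satisfies accountability: for every nonempty S there exists s ∈ S with f(S \ {s}) ≥ f(S) - f(S)/|S|. -/
/- Removing one element of `S` costs a region `R` at most the fraction `1 / #S` of its share
`#(R ∩ S)`: if `S ⊆ R` any element costs exactly that, and otherwise an element outside `R`
costs nothing. Applied to a region attaining the maximum, this gives accountability. -/

open Finset

lemma exists_mem_card_inter_le_card_inter_erase {U : Type*} [DecidableEq U] (R : Finset U)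
    {S : Finset U} (hS : S.Nonempty) :
    ∃ s ∈ S, (#(R ∩ S) : ℝ) * (1 - 1 / #S) ≤ #(R ∩ S.erase s) := by
  have hcard : (0 : ℝ) < #S := by exact_mod_cast hS.card_pos
  by_cases hSR : S ⊆ R
  · obtain ⟨s, hs⟩ := hS
    refine ⟨s, hs, le_of_eq ?_⟩
    rw [inter_eq_right.mpr hSR, inter_eq_right.mpr ((erase_subset s S).trans hSR),
      card_erase_of_mem hs, Nat.cast_pred (card_pos.mpr ⟨s, hs⟩)]
    field_simp
  · obtain ⟨s, hsS, hsR⟩ := not_subset.mp hSR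
    refine ⟨s, hsS, ?_⟩
    rw [inter_erase, erase_eq_of_notMem fun h => hsR (mem_of_mem_inter_left h)]
    have : 0 ≤ 1 / (#S : ℝ) := by positivity
    nlinarith [(Nat.cast_nonneg (#(R ∩ S)) : (0 : ℝ) ≤ _)]

lemma exists_mem_sup'_le_sup'_erase {ι U : Type*} [DecidableEq U] (I : Finset ι)
    (hI : I.Nonempty) (R : ι → Finset U) (δ : ι → ℝ) (hδ : ∀ i ∈ I, 0 ≤ δ i)
    {S : Finset U} (hS : S.Nonempty) :
    ∃ s ∈ S, I.sup' hI (fun i => (#(R i ∩ S) : ℝ) * δ i) * (1 - 1 / #S) ≤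
      I.sup' hI (fun i => (#(R i ∩ S.erase s) : ℝ) * δ i) := by
  obtain ⟨i, hi, hmax⟩ := exists_mem_eq_sup' hI fun i => (#(R i ∩ S) : ℝ) * δ i
  obtain ⟨s, hs, hloss⟩ := exists_mem_card_inter_le_card_inter_erase (R i) hS
  refine ⟨s, hs, ?_⟩
  calc I.sup' hI (fun i => (#(R i ∩ S) : ℝ) * δ i) * (1 - 1 / #S)
      = (#(R i ∩ S) : ℝ) * (1 - 1 / #S) * δ i := by rw [hmax]; ring
    _ ≤ #(R i ∩ S.erase s) * δ i := mul_le_mul_of_nonneg_right hloss (hδ i hi)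
    _ ≤ _ := le_sup' (fun i => (#(R i ∩ S.erase s) : ℝ) * δ i) hi

theorem stmt_6_general {U : Type*} [DecidableEq U] (N : ℕ) (hN : 1 ≤ N)
    (R : ℕ → Finset U) (δ : ℕ → ℝ)
    (hδ : ∀ i : ℕ, 0 ≤ δ i)
    (f : Finset U → ℝ)
    (hf : ∀ S : Finset U, f S = (Finset.Icc 1 N).sup' (Finset.nonempty_Icc.mpr hN)
      (fun i => ((R i ∩ S).card : ℝ) * δ i)) :
    ∀ S : Finset U, S ⊆ (Finset.Icc 1 N).biUnion R → S.Nonempty →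
      ∃ s ∈ S, f (S.erase s) ≥ f S - f S / S.card := by
  intro S _ hS
  obtain ⟨s, hs, hloss⟩ :=
    exists_mem_sup'_le_sup'_erase _ (nonempty_Icc.mpr hN) R δ (fun i _ => hδ i) hS
  refine ⟨s, hs, ?_⟩
  rw [ge_iff_le, show f S - f S / #S = f S * (1 - 1 / #S) by ring, hf, hf]
  exact hloss

/-- The Region Choosing objective satisfies accountability. -/
theorem stmt_6 {U : Type*} [DecidableEq U] (N : ℕ) (hN : 1 ≤ N)
    (R : ℕ → Finset U) (δ : ℕ → ℝ)
    (hδ : ∀ i : ℕ, 0 ≤ δ i)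
    (hdisj : ∀ i ∈ Finset.Icc 1 N, ∀ j ∈ Finset.Icc 1 N, i ≠ j → Disjoint (R i) (R j))
    (hcard : ∀ i ∈ Finset.Icc 1 N, (R i).card = i)
    (f : Finset U → ℝ)
    (hf : ∀ S : Finset U, f S = (Finset.Icc 1 N).sup' (Finset.nonempty_Icc.mpr hN)
      (fun i => ((R i ∩ S).card : ℝ) * δ i)) :
    ∀ S : Finset U, S ⊆ (Finset.Icc 1 N).biUnion R → S.Nonempty →
      ∃ s ∈ S, f (S.erase s) ≥ f S - f S / S.card :=
  stmt_6_general N hN R δ hδ f hf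
end

section
/- Let p_1, ..., p_k be nonnegative reals, α > 0 with k > α, and β > 0, satisfying p_i ≥ (β + α·Σ_{j=i+1}^{k} p_j)/(k−α) for all 1 ≤ i < k and p_k ≥ β/(k−α). Then p_i ≥ (β/(k−α))·(k/(k−α))^{k−i} for all 1 ≤ i ≤ k. -/
/-!
The sequence `q i = β / (k - α) * (k / (k - α)) ^ (k - i)` satisfies the recursion with equality:
`β + α * ∑_{j > i} q j` grows by `α * q (i + 1) + (k - α) * q (i + 1) = k * q (i + 1)` when `i`
drops by one, which is exactly the factor `k / (k - α)`. Since the right-hand side of the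
recursion is monotone in the tail (`α ≥ 0`, `k - α > 0`), downward induction gives `q ≤ p`.
-/

open Finset

theorem le_of_tail_sum_recursion {m k : ℕ} {a b d : ℝ} (ha : 0 ≤ a) (hd : 0 < d) {p q : ℕ → ℝ}
    (hp : ∀ i, m ≤ i → i ≤ k → (b + a * ∑ j ∈ Icc (i + 1) k, p j) / d ≤ p i)
    (hq : ∀ i, m ≤ i → i ≤ k → q i = (b + a * ∑ j ∈ Icc (i + 1) k, q j) / d) :
    ∀ i, m ≤ i → i ≤ k → q i ≤ p i := by
  suffices h : ∀ i ≤ k + 1, ∀ j ∈ Icc i k, m ≤ j → q j ≤ p j from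
    fun i hmi hik ↦ h i (by omega) i (mem_Icc.2 ⟨le_rfl, hik⟩) hmi
  intro i hi
  induction hi using Nat.decreasingInduction with
  | self => simp
  | of_succ i hik ih =>
    intro j hj hmj
    obtain ⟨hij, hjk⟩ := mem_Icc.1 hj
    obtain rfl | hij := hij.eq_or_lt
    · have htail : ∑ l ∈ Icc (i + 1) k, q l ≤ ∑ l ∈ Icc (i + 1) k, p l :=
        sum_le_sum fun l hl ↦ ih l hl (by grind)
      calc q i = (b + a * ∑ l ∈ Icc (i + 1) k, q l) / d := hq i hmj hjk
        _ ≤ (b + a * ∑ l ∈ Icc (i + 1) k, p l) / d := by gcongr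
        _ ≤ p i := hp i hmj hjk
    · exact ih j (mem_Icc.2 ⟨hij, hjk⟩) hmj

theorem geom_tail_sum_recursion (k : ℕ) (α β : ℝ) (hkα : (k : ℝ) - α ≠ 0) {i : ℕ} (hik : i ≤ k) :
    β + α * ∑ j ∈ Icc (i + 1) k, β / ((k : ℝ) - α) * ((k : ℝ) / ((k : ℝ) - α)) ^ (k - j) =
      ((k : ℝ) - α) * (β / ((k : ℝ) - α) * ((k : ℝ) / ((k : ℝ) - α)) ^ (k - i)) := by
  induction hik using Nat.decreasingInduction with
  | self => simp [mul_div_cancel₀ _ hkα]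
  | of_succ i hik ih =>
    rw [← insert_Icc_add_one_left_eq_Icc (by omega : i + 1 ≤ k), sum_insert (by simp),
      show k - i = k - (i + 1) + 1 by omega, pow_succ]
    have hratio : ((k : ℝ) - α) * ((k : ℝ) / ((k : ℝ) - α)) = k := mul_div_cancel₀ _ hkα
    linear_combination ih -
      β / ((k : ℝ) - α) * ((k : ℝ) / ((k : ℝ) - α)) ^ (k - (i + 1)) * hratio

theorem stmt_8_general (k : ℕ) (α β : ℝ) (hα : 0 < α) (hk : α < k)
    (p : ℕ → ℝ)
    (hrec : ∀ i : ℕ, 1 ≤ i → i < k →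
      p i ≥ (β + α * ∑ j ∈ Finset.Icc (i + 1) k, p j) / ((k : ℝ) - α))
    (hlast : p k ≥ β / ((k : ℝ) - α)) :
    ∀ i : ℕ, 1 ≤ i → i ≤ k →
      p i ≥ β / ((k : ℝ) - α) * ((k : ℝ) / ((k : ℝ) - α)) ^ (k - i) := by
  have hkα : 0 < (k : ℝ) - α := by linarith
  refine le_of_tail_sum_recursion (b := β) hα.le hkα (fun i hi hik ↦ ?_) (fun i _ hik ↦ ?_)
  · obtain hik | rfl := hik.lt_or_eq
    · exact hrec i hi hik
    · simpa using hlast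
  · rw [geom_tail_sum_recursion k α β hkα.ne' hik, mul_div_cancel_left₀ _ hkα.ne']

/-- Closed-form lower bound on the greedy increments. -/
theorem stmt_8 (k : ℕ) (α β : ℝ) (hα : 0 < α) (hβ : 0 < β) (hk : α < k)
    (p : ℕ → ℝ) (hp : ∀ i : ℕ, 1 ≤ i → i ≤ k → 0 ≤ p i)
    (hrec : ∀ i : ℕ, 1 ≤ i → i < k →
      p i ≥ (β + α * ∑ j ∈ Finset.Icc (i + 1) k, p j) / ((k : ℝ) - α))
    (hlast : p k ≥ β / ((k : ℝ) - α)) :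
    ∀ i : ℕ, 1 ≤ i → i ≤ k →
      p i ≥ β / ((k : ℝ) - α) * ((k : ℝ) / ((k : ℝ) - α)) ^ (k - i) :=
  stmt_8_general k α β hα hk p hrec hlast
end

section
/- The maximum-weight-matching objective is 2-augmentable: for a graph G with edge weights w ≥ 0, defining f(X) as the maximum weight of a matching contained in X, for all edge sets S, T with T \ S ≠ ∅ there exists e ∈ T \ S with f(S ∪ {e}) − f(S) ≥ (f(S ∪ T) − 2·f(S))/|T \ S|. -/
/-!
Fix a maximum-weight matching `N ⊆ S` and a maximum-weight matching `M ⊆ S ∪ T`. For any edge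
`e`, the edge `e` together with the edges of `N` not touching `e` is a matching in `insert e S`,
so the gain `f (insert e S) - f S` is at least `w e` minus the weight of the `N`-edges touching
`e`. Summing over `e ∈ M`, every edge of `N` touches at most two edges of the matching `M`, so
the total gain over `M` is at least `f (S ∪ T) - 2 f S`. Gains vanish on `S`, hence the total
gain over `T \ S` is at least as large, and some edge of `T \ S` reaches the average.
-/

open Finset

section

open Classical

variable {V : Type*}

def IsEdgeMatching (M : Finset (Sym2 V)) : Prop :=
  ∀ e ∈ M, ∀ e' ∈ M, e ≠ e' → ∀ v : V, v ∈ e → v ∉ e'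

def IsMaxMatchingWeight (w : Sym2 V → ℝ) (f : Finset (Sym2 V) → ℝ) : Prop :=
  ∀ X : Finset (Sym2 V),
    IsGreatest {x | ∃ M ⊆ X, IsEdgeMatching M ∧ ∑ e ∈ M, w e = x} (f X)

noncomputable def adjacentWeight (w : Sym2 V → ℝ) (N : Finset (Sym2 V)) (e : Sym2 V) : ℝ :=
  ∑ g ∈ N with ∃ x ∈ e, x ∈ g, w g

lemma sum_insert_filter_not_adjacent [DecidableEq V] (w : Sym2 V → ℝ) (N : Finset (Sym2 V))
    (e : Sym2 V) :
    ∑ g ∈ insert e {g ∈ N | ¬∃ x ∈ e, x ∈ g}, w g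
      = w e + (∑ g ∈ N, w g - adjacentWeight w N e) := by
  have he : e ∉ {g ∈ N | ¬∃ x ∈ e, x ∈ g} := fun h =>
    (mem_filter.1 h).2 ⟨_, Sym2.out_fst_mem e, Sym2.out_fst_mem e⟩
  rw [sum_insert he, adjacentWeight,
    ← sum_filter_add_sum_filter_not N (fun g => ∃ x ∈ e, x ∈ g)]
  ring

namespace IsEdgeMatching

variable {M N : Finset (Sym2 V)}

lemma card_filter_mem_le_one (hM : IsEdgeMatching M) (v : V) : #{e ∈ M | v ∈ e} ≤ 1 :=
  card_le_one.2 fun a ha b hb => by_contra fun hab =>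
    hM a (mem_filter.1 ha).1 b (mem_filter.1 hb).1 hab v (mem_filter.1 ha).2 (mem_filter.1 hb).2

lemma card_filter_adjacent_le_two (hM : IsEdgeMatching M) (g : Sym2 V) :
    #{e ∈ M | ∃ x ∈ e, x ∈ g} ≤ 2 := by
  induction g using Sym2.ind with
  | _ u v =>
    calc #{e ∈ M | ∃ x ∈ e, x ∈ s(u, v)}
        ≤ #({e ∈ M | u ∈ e} ∪ {e ∈ M | v ∈ e}) := by
          refine card_le_card fun e he => ?_
          obtain ⟨heM, x, hxe, hxg⟩ := mem_filter.1 he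
          rcases Sym2.mem_iff.1 hxg with rfl | rfl <;> simp [heM, hxe]
      _ ≤ #{e ∈ M | u ∈ e} + #{e ∈ M | v ∈ e} := card_union_le _ _
      _ ≤ 2 := by
          have := hM.card_filter_mem_le_one u
          have := hM.card_filter_mem_le_one v
          omega

lemma insert_filter_not_adjacent [DecidableEq V] (hN : IsEdgeMatching N) (e : Sym2 V) :
    IsEdgeMatching (insert e {g ∈ N | ¬∃ x ∈ e, x ∈ g}) := by
  intro a ha b hb hab v hva hvb
  rcases mem_insert.1 ha with rfl | ha <;> rcases mem_insert.1 hb with rfl | hb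
  · exact hab rfl
  · exact (mem_filter.1 hb).2 ⟨v, hva, hvb⟩
  · exact (mem_filter.1 ha).2 ⟨v, hvb, hva⟩
  · exact hN a (mem_filter.1 ha).1 b (mem_filter.1 hb).1 hab v hva hvb

lemma sum_adjacentWeight_le (hM : IsEdgeMatching M) {w : Sym2 V → ℝ} (hw : ∀ e, 0 ≤ w e)
    (N : Finset (Sym2 V)) :
    ∑ e ∈ M, adjacentWeight w N e ≤ 2 * ∑ g ∈ N, w g := by
  calc ∑ e ∈ M, adjacentWeight w N e
      = ∑ g ∈ N, (#{e ∈ M | ∃ x ∈ e, x ∈ g} : ℝ) * w g := by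
        simp only [adjacentWeight, sum_filter]
        rw [sum_comm]
        refine sum_congr rfl fun g _ => ?_
        rw [← sum_filter, sum_const, nsmul_eq_mul]
    _ ≤ ∑ g ∈ N, 2 * w g := by
        gcongr with g
        · exact hw g
        · exact_mod_cast hM.card_filter_adjacent_le_two g
    _ = 2 * ∑ g ∈ N, w g := (mul_sum _ _ _).symm

end IsEdgeMatching

namespace IsMaxMatchingWeight

variable {w : Sym2 V → ℝ} {f : Finset (Sym2 V) → ℝ}

lemma monotone (hf : IsMaxMatchingWeight w f) : Monotone f := fun X Y hXY => by
  obtain ⟨M, hMX, hM, hMw⟩ := (hf X).1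
  exact (hf Y).2 ⟨M, hMX.trans hXY, hM, hMw⟩

variable [DecidableEq V]

lemma sub_adjacentWeight_le_gain (hf : IsMaxMatchingWeight w f) {S N : Finset (Sym2 V)}
    (hNS : N ⊆ S) (hN : IsEdgeMatching N) (hNw : ∑ g ∈ N, w g = f S) (e : Sym2 V) :
    w e - adjacentWeight w N e ≤ f (insert e S) - f S := by
  have := (hf (insert e S)).2
    ⟨_, insert_subset_insert e ((filter_subset _ N).trans hNS), hN.insert_filter_not_adjacent e,
      sum_insert_filter_not_adjacent w N e⟩
  rw [hNw] at this
  linarith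

lemma sub_two_mul_le_sum_gain (hf : IsMaxMatchingWeight w f) (hw : ∀ e, 0 ≤ w e)
    (S T : Finset (Sym2 V)) :
    f (S ∪ T) - 2 * f S ≤ ∑ e ∈ T \ S, (f (insert e S) - f S) := by
  obtain ⟨M, hMST, hM, hMw⟩ := (hf (S ∪ T)).1
  obtain ⟨N, hNS, hN, hNw⟩ := (hf S).1
  have gain_eq_zero : ∀ e ∈ S, f (insert e S) - f S = 0 := fun e he => by
    rw [insert_eq_of_mem he, sub_self]
  calc f (S ∪ T) - 2 * f S
      ≤ ∑ e ∈ M, w e - ∑ e ∈ M, adjacentWeight w N e := by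
        rw [hMw, ← hNw]
        linarith [hM.sum_adjacentWeight_le hw N]
    _ = ∑ e ∈ M, (w e - adjacentWeight w N e) := (sum_sub_distrib _ _).symm
    _ ≤ ∑ e ∈ M, (f (insert e S) - f S) :=
        sum_le_sum fun e _ => hf.sub_adjacentWeight_le_gain hNS hN hNw e
    _ = ∑ e ∈ M \ S, (f (insert e S) - f S) :=
        (sum_subset sdiff_subset fun e heM he => gain_eq_zero e (by simpa [heM] using he)).symm
    _ ≤ ∑ e ∈ T \ S, (f (insert e S) - f S) :=
        sum_le_sum_of_subset_of_nonneg
          ((sdiff_subset_sdiff_left S hMST).trans (union_sdiff_left S T).subset)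
          fun e _ _ => sub_nonneg.2 (hf.monotone (subset_insert e S))

end IsMaxMatchingWeight

end

theorem stmt_15_general {V : Type*} [DecidableEq V]
    (E : Finset (Sym2 V)) (w : Sym2 V → ℝ) (hw : ∀ e, 0 ≤ w e)
    (f : Finset (Sym2 V) → ℝ)
    (hf : ∀ X : Finset (Sym2 V), IsGreatest
      {x | ∃ M ⊆ X,
        (∀ e ∈ M, ∀ e' ∈ M, e ≠ e' → ∀ v : V, v ∈ e → v ∉ e') ∧
        ∑ e ∈ M, w e = x} (f X)) :
    ∀ S T : Finset (Sym2 V), S ⊆ E → T ⊆ E → (T \ S).Nonempty →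
      ∃ e ∈ T \ S,
        (f (S ∪ T) - 2 * f S) / (((T \ S).card : ℝ)) ≤ f (insert e S) - f S := by
  intro S T _ _ hne
  refine exists_le_of_le_expect hne ?_
  rw [expect_eq_sum_div_card]
  gcongr
  exact IsMaxMatchingWeight.sub_two_mul_le_sum_gain hf hw S T

/-- The maximum-weight-matching objective is 2-augmentable. -/
theorem stmt_15 {V : Type*} [Fintype V] [DecidableEq V]
    (E : Finset (Sym2 V)) (w : Sym2 V → ℝ) (hw : ∀ e, 0 ≤ w e)
    (f : Finset (Sym2 V) → ℝ)
    (hf : ∀ X : Finset (Sym2 V), IsGreatest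
      {x | ∃ M ⊆ X,
        (∀ e ∈ M, ∀ e' ∈ M, e ≠ e' → ∀ v : V, v ∈ e → v ∉ e') ∧
        ∑ e ∈ M, w e = x} (f X)) :
    ∀ S T : Finset (Sym2 V), S ⊆ E → T ⊆ E → (T \ S).Nonempty →
      ∃ e ∈ T \ S,
        (f (S ∪ T) - 2 * f S) / (((T \ S).card : ℝ)) ≤ f (insert e S) - f S :=
  stmt_15_general E w hw f hf
end
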